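/- The dual gauge of F_θ, defined by F_θ^o(x) = sup{ ⟨x, z⟩ / F_θ(z) : z ∈ 𝕊^{n−1} }, is given explicitly by F_θ^o(x) = |x|² / ( √(cos²θ ⟨x, Eₙ⟩² + sin²θ |x|²) − cos θ ⟨x, Eₙ⟩ ) for x ≠ 0, and F_θ^o(0) = 0. -/

import Mathlib

open MeasureTheory Real
noncomputable section
set_option linter.unusedVariables false
abbrev E (n : ℕ) := EuclideanSpace ℝ (Fin n)
def lastE (n : ℕ) (hn : 0 < n) : E n := EuclideanSpace.single ⟨n-1, by omega⟩ 1
def capGauge (n : ℕ) (hn : 0 < n) (θ : ℝ) (ξ : E n) : ℝ :=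
  ‖ξ‖ - Real.cos θ * (inner ℝ ξ (lastE n hn) : ℝ)
def capDual (n : ℕ) (hn : 0 < n) (θ : ℝ) (x : E n) : ℝ :=
  sSup {r : ℝ | ∃ z : E n, ‖z‖ = 1 ∧ r = (inner ℝ x z : ℝ) / capGauge n hn θ z}

/-! For `x ≠ 0` let `M` be the claimed value and `y = x + M cos θ Eₙ`. The formula for `M` is
exactly the positive root of `‖y‖ = M`. Then for every `z`,
`⟪x, z⟫ = ⟪y, z⟫ - M cos θ ⟪z, Eₙ⟫ ≤ M (‖z‖ - cos θ ⟪z, Eₙ⟫) = M F_θ(z)`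
by Cauchy–Schwarz, with equality at `z = y / M`, so the supremum is attained and equals `M`. -/

open scoped InnerProductSpace

section Gauge

variable {V : Type*} [NormedAddCommGroup V] [InnerProductSpace ℝ V] {e x : V} {c M : ℝ}

lemma norm_sub_mul_inner_pos (he : ‖e‖ = 1) (hc : |c| < 1) {z : V} (hz : z ≠ 0) :
    0 < ‖z‖ - c * ⟪z, e⟫_ℝ := by
  have hze : |⟪z, e⟫_ℝ| ≤ ‖z‖ := by simpa [he] using abs_real_inner_le_norm z e
  have : c * ⟪z, e⟫_ℝ < ‖z‖ :=
    calc c * ⟪z, e⟫_ℝ ≤ |c| * |⟪z, e⟫_ℝ| := (le_abs_self _).trans (abs_mul _ _).le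
      _ ≤ |c| * ‖z‖ := by gcongr
      _ < ‖z‖ := mul_lt_of_lt_one_left (norm_pos_iff.2 hz) hc
  linarith

lemma norm_sub_mul_inner_smul {t : ℝ} (ht : 0 ≤ t) (z : V) :
    ‖t • z‖ - c * ⟪t • z, e⟫_ℝ = t * (‖z‖ - c * ⟪z, e⟫_ℝ) := by
  rw [norm_smul, real_inner_smul_left, norm_of_nonneg ht]
  ring

lemma inner_le_mul_norm_sub_mul_inner (hM : ‖x + (M * c) • e‖ ≤ M) (z : V) :
    ⟪x, z⟫_ℝ ≤ M * (‖z‖ - c * ⟪z, e⟫_ℝ) := by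
  have hCS : ⟪x + (M * c) • e, z⟫_ℝ ≤ M * ‖z‖ :=
    (real_inner_le_norm _ z).trans (by gcongr)
  rw [inner_add_left, real_inner_smul_left, real_inner_comm z e] at hCS
  linarith

lemma inner_add_smul_eq_mul_norm_sub_mul_inner (hM : ‖x + (M * c) • e‖ = M) :
    ⟪x, x + (M * c) • e⟫_ℝ =
      M * (‖x + (M * c) • e‖ - c * ⟪x + (M * c) • e, e⟫_ℝ) := by
  set y := x + (M * c) • e
  have hx : x = y - (M * c) • e := by simp [y]
  conv_lhs => rw [hx]
  rw [inner_sub_left, real_inner_self_eq_norm_sq, real_inner_smul_left, real_inner_comm e y, hM]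
  ring

lemma isGreatest_inner_div_norm_sub_mul_inner (he : ‖e‖ = 1) (hc : |c| < 1) (hM0 : 0 < M)
    (hM : ‖x + (M * c) • e‖ = M) :
    IsGreatest {r : ℝ | ∃ z : V, ‖z‖ = 1 ∧ r = ⟪x, z⟫_ℝ / (‖z‖ - c * ⟪z, e⟫_ℝ)} M := by
  set y := x + (M * c) • e
  have hy : y ≠ 0 := norm_pos_iff.1 (hM ▸ hM0)
  refine ⟨⟨M⁻¹ • y, ?_, ?_⟩, ?_⟩
  · rw [norm_smul, hM, norm_inv, norm_of_nonneg hM0.le, inv_mul_cancel₀ hM0.ne']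
  · rw [norm_sub_mul_inner_smul (inv_nonneg.2 hM0.le), real_inner_smul_right,
      inner_add_smul_eq_mul_norm_sub_mul_inner hM, mul_div_mul_left _ _ (inv_ne_zero hM0.ne'),
      mul_div_cancel_right₀ _ (norm_sub_mul_inner_pos he hc hy).ne']
  · rintro r ⟨z, hz, rfl⟩
    have hF := norm_sub_mul_inner_pos (c := c) he hc (norm_ne_zero_iff.1 (hz ▸ one_ne_zero))
    exact (div_le_iff₀ hF).2 (inner_le_mul_norm_sub_mul_inner hM.le z)

lemma norm_add_smul_sq_of_norm_eq_one (he : ‖e‖ = 1) (t : ℝ) :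
    ‖x + t • e‖ ^ 2 = ‖x‖ ^ 2 + 2 * t * ⟪x, e⟫_ℝ + t ^ 2 := by
  rw [norm_add_sq_real, real_inner_smul_right, norm_smul, he, norm_eq_abs, mul_one, sq_abs]
  ring

end Gauge

section Root

variable {a c s N : ℝ}

lemma sqrt_sub_mul_pos (hs : s ≠ 0) (hN : N ≠ 0) :
    0 < √(c ^ 2 * a ^ 2 + s ^ 2 * N ^ 2) - c * a := by
  have : |c * a| < √(c ^ 2 * a ^ 2 + s ^ 2 * N ^ 2) := by
    rw [← sqrt_sq_eq_abs, mul_pow]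
    exact sqrt_lt_sqrt (by positivity) (by simp; positivity)
  linarith [le_abs_self (c * a)]

lemma sq_div_sqrt_sub_mul_sq (hsc : s ^ 2 + c ^ 2 = 1) (hs : s ≠ 0) (hN : N ≠ 0) :
    (N ^ 2 / (√(c ^ 2 * a ^ 2 + s ^ 2 * N ^ 2) - c * a)) ^ 2 =
      N ^ 2 + 2 * (N ^ 2 / (√(c ^ 2 * a ^ 2 + s ^ 2 * N ^ 2) - c * a) * c) * a +
        (N ^ 2 / (√(c ^ 2 * a ^ 2 + s ^ 2 * N ^ 2) - c * a) * c) ^ 2 := by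
  have hD := sqrt_sub_mul_pos (a := a) (c := c) hs hN
  set R := √(c ^ 2 * a ^ 2 + s ^ 2 * N ^ 2)
  have hR : R ^ 2 = c ^ 2 * a ^ 2 + s ^ 2 * N ^ 2 := sq_sqrt (by positivity)
  field_simp
  linear_combination -hR - N ^ 2 * hsc

end Root

lemma norm_lastE (n : ℕ) (hn : 0 < n) : ‖lastE n hn‖ = 1 := by
  simp [lastE]

theorem capDual_formula_general (n : ℕ) (hn : 0 < n) (θ : ℝ) (hθ : θ ∈ Set.Ioo 0 π) :
    capDual n hn θ 0 = 0 ∧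
    ∀ x : E n, x ≠ 0 →
      capDual n hn θ x = ‖x‖ ^ 2 /
        (Real.sqrt ((Real.cos θ) ^ 2 * (inner ℝ x (lastE n hn) : ℝ) ^ 2
            + (Real.sin θ) ^ 2 * ‖x‖ ^ 2)
          - Real.cos θ * (inner ℝ x (lastE n hn) : ℝ)) := by
  have he := norm_lastE n hn
  have hs : sin θ ≠ 0 := (sin_pos_of_pos_of_lt_pi hθ.1 hθ.2).ne'
  have hc : |cos θ| < 1 := by
    rw [← sq_lt_one_iff_abs_lt_one]
    linarith [sin_sq_add_cos_sq θ, sq_pos_of_ne_zero hs]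
  refine ⟨?_, fun x hx => ?_⟩
  · have hset : {r : ℝ | ∃ z : E n, ‖z‖ = 1 ∧ r = ⟪(0 : E n), z⟫_ℝ / capGauge n hn θ z} = {0} :=
      Set.eq_singleton_iff_unique_mem.2
        ⟨⟨lastE n hn, he, by simp⟩, by rintro r ⟨z, -, rfl⟩; simp⟩
    rw [capDual, hset, csSup_singleton]
  · have hN : ‖x‖ ≠ 0 := norm_ne_zero_iff.2 hx
    set M := ‖x‖ ^ 2 / (√(cos θ ^ 2 * ⟪x, lastE n hn⟫_ℝ ^ 2 + sin θ ^ 2 * ‖x‖ ^ 2)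
      - cos θ * ⟪x, lastE n hn⟫_ℝ)
    have hM0 : 0 < M := div_pos (by positivity) (sqrt_sub_mul_pos hs hN)
    have hM : ‖x + (M * cos θ) • lastE n hn‖ = M := by
      rw [← sq_eq_sq₀ (norm_nonneg _) hM0.le, norm_add_smul_sq_of_norm_eq_one he]
      exact (sq_div_sqrt_sub_mul_sq (sin_sq_add_cos_sq θ) hs hN).symm
    exact (isGreatest_inner_div_norm_sub_mul_inner he hc hM0 hM).csSup_eq

/-- Explicit formula for the dual capillary gauge. -/
theorem capDual_formula (n : ℕ) (hn : 0 < n) (hn2 : 2 ≤ n) (θ : ℝ) (hθ : θ ∈ Set.Ioo 0 π) :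
    capDual n hn θ 0 = 0 ∧
    ∀ x : E n, x ≠ 0 →
      capDual n hn θ x = ‖x‖ ^ 2 /
        (Real.sqrt ((Real.cos θ) ^ 2 * (inner ℝ x (lastE n hn) : ℝ) ^ 2
            + (Real.sin θ) ^ 2 * ‖x‖ ^ 2)
          - Real.cos θ * (inner ℝ x (lastE n hn) : ℝ)) :=
  capDual_formula_general n hn θ hθ
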